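/- arXiv:math/0511058 — 5 statements merged into one kernel-verified Lean document; each statement's English description precedes it below -/
import Mathlib

section
/- For i.i.d. positive integrable random variables ζ_1, ζ_2, ..., define σ_k := ζ_1 + ... + ζ_k and η_k := E[1/σ_k]. Then the sequence (η_k) is convex, i.e., η_k - η_{k+1} ≥ η_{k+1} - η_{k+2} for all k ≥ 1. -/
/-!
Write `F(s, y) = 1/s - 1/(s + y) = y / (s (s + y))`, which is antitone in `s > 0` for `y ≥ 0`.
Then `η k - η (k+1) = E[F(σ k, ζ k)]` and `η (k+1) - η (k+2) = E[F(σ k + ζ k, ζ (k+1))]`.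
Since `σ k` is independent of both `ζ k` and `ζ (k+1)`, which have the same law, the pairs
`(σ k, ζ k)` and `(σ k, ζ (k+1))` have the same law, so
`E[F(σ k, ζ k)] = E[F(σ k, ζ (k+1))] ≥ E[F(σ k + ζ k, ζ (k+1))]`.
-/

open MeasureTheory ProbabilityTheory Finset

lemma one_div_sub_one_div_add_le_of_le {s t y : ℝ} (hs : 0 < s) (hst : s ≤ t) (hy : 0 ≤ y) :
    1 / t - 1 / (t + y) ≤ 1 / s - 1 / (s + y) := by
  have ht : 0 < t := hs.trans_le hst
  have hsub : ∀ u, 0 < u → 1 / u - 1 / (u + y) = y / (u * (u + y)) := fun u hu => by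
    field_simp
    ring
  rw [hsub t ht, hsub s hs]
  exact div_le_div_of_nonneg_left hy (by positivity) (by gcongr)

section

variable {Ω : Type*} [MeasurableSpace Ω] {μ : Measure Ω} {S X Y : Ω → ℝ}

lemma integrable_one_div_sub_one_div_add (hS : ∀ᵐ ω ∂μ, 0 < S ω) (hY : ∀ᵐ ω ∂μ, 0 ≤ Y ω)
    (hSY : AEMeasurable (fun ω => (S ω, Y ω)) μ) (hint : Integrable (fun ω => 1 / S ω) μ) :
    Integrable (fun ω => 1 / S ω - 1 / (S ω + Y ω)) μ := by
  have hmeas : Measurable fun p : ℝ × ℝ => 1 / p.1 - 1 / (p.1 + p.2) := by fun_prop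
  refine hint.mono' (hmeas.comp_aemeasurable hSY).aestronglyMeasurable ?_
  filter_upwards [hS, hY] with ω hSω hYω
  have hle : 1 / (S ω + Y ω) ≤ 1 / S ω := one_div_le_one_div_of_le hSω (by linarith)
  have hnonneg : 0 ≤ 1 / (S ω + Y ω) := by positivity
  rw [Real.norm_of_nonneg (by linarith)]
  linarith

theorem integral_one_div_add_sub_le_of_identDistrib (hS : ∀ᵐ ω ∂μ, 0 < S ω)
    (hX : ∀ᵐ ω ∂μ, 0 ≤ X ω) (hY : ∀ᵐ ω ∂μ, 0 ≤ Y ω)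
    (hXY : IdentDistrib (fun ω => (S ω, X ω)) (fun ω => (S ω, Y ω)) μ μ)
    (hint₀ : Integrable (fun ω => 1 / S ω) μ) (hint₁ : Integrable (fun ω => 1 / (S ω + X ω)) μ)
    (hint₂ : Integrable (fun ω => 1 / (S ω + X ω + Y ω)) μ) :
    ∫ ω, 1 / (S ω + X ω) ∂μ - ∫ ω, 1 / (S ω + X ω + Y ω) ∂μ
      ≤ ∫ ω, 1 / S ω ∂μ - ∫ ω, 1 / (S ω + X ω) ∂μ := by
  have hmeas : Measurable fun p : ℝ × ℝ => 1 / p.1 - 1 / (p.1 + p.2) := by fun_prop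
  have hpointwise : ∀ᵐ ω ∂μ, 1 / (S ω + X ω) - 1 / (S ω + X ω + Y ω)
      ≤ 1 / S ω - 1 / (S ω + Y ω) := by
    filter_upwards [hS, hX, hY] with ω hSω hXω hYω
    exact one_div_sub_one_div_add_le_of_le hSω (by linarith) hYω
  calc ∫ ω, 1 / (S ω + X ω) ∂μ - ∫ ω, 1 / (S ω + X ω + Y ω) ∂μ
      = ∫ ω, 1 / (S ω + X ω) - 1 / (S ω + X ω + Y ω) ∂μ := (integral_sub hint₁ hint₂).symm
    _ ≤ ∫ ω, 1 / S ω - 1 / (S ω + Y ω) ∂μ :=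
      integral_mono_ae (hint₁.sub hint₂)
        (integrable_one_div_sub_one_div_add hS hY hXY.aemeasurable_snd hint₀) hpointwise
    _ = ∫ ω, 1 / S ω - 1 / (S ω + X ω) ∂μ := (hXY.comp hmeas).integral_eq.symm
    _ = ∫ ω, 1 / S ω ∂μ - ∫ ω, 1 / (S ω + X ω) ∂μ := integral_sub hint₀ hint₁

end

theorem harmonic_sums_convex_general
    {Ω : Type*} [MeasureSpace Ω]
    (ζ : ℕ → Ω → ℝ)
    (hindep : iIndepFun ζ ℙ)
    (hident : ∀ i, IdentDistrib (ζ i) (ζ 0) ℙ ℙ)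
    (hpos : ∀ i, ∀ᵐ ω ∂ℙ, 0 < ζ i ω)
    (σ : ℕ → Ω → ℝ) (hσ : ∀ k ω, σ k ω = ∑ i ∈ Finset.range k, ζ i ω)
    (η : ℕ → ℝ) (hη : ∀ k, η k = ∫ ω, 1 / σ k ω ∂ℙ)
    (hηint : ∀ k, 1 ≤ k → Integrable (fun ω => 1 / σ k ω) ℙ) :
    ∀ k, 1 ≤ k → η k - η (k + 1) ≥ η (k + 1) - η (k + 2) := by
  intro k hk
  have := hindep.isProbabilityMeasure
  have hσ_sum : σ k = ∑ i ∈ range k, ζ i := by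
    rw [sum_fn]
    exact funext (hσ k)
  have hσ_succ : ∀ j ω, σ (j + 1) ω = σ j ω + ζ j ω := fun j ω => by
    rw [hσ, hσ, sum_range_succ]
  have hσ_pos : ∀ᵐ ω ∂ℙ, 0 < σ k ω := by
    filter_upwards [ae_all_iff.2 hpos] with ω hω
    rw [hσ]
    exact sum_pos (fun i _ => hω i) (nonempty_range_iff.2 (by omega))
  have hζ_meas : ∀ i, AEMeasurable (ζ i) ℙ := fun i => (hident i).aemeasurable_fst
  have hσ_indep : ∀ j, k ≤ j → σ k ⟂ᵢ[ℙ] ζ j := fun j hj =>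
    hσ_sum ▸ hindep.indepFun_finsetSum_of_notMem₀ hζ_meas (by simp; omega)
  have hexch : IdentDistrib (fun ω => (σ k ω, ζ k ω)) (fun ω => (σ k ω, ζ (k + 1) ω)) ℙ ℙ :=
    (IdentDistrib.refl (hσ_sum ▸ aemeasurable_sum _ fun i _ => hζ_meas i)).prodMk
      ((hident k).trans (hident (k + 1)).symm) (hσ_indep k le_rfl) (hσ_indep (k + 1) k.le_succ)
  have hint₁ := hηint (k + 1) (by omega)
  have hint₂ := hηint (k + 2) (by omega)
  simp only [hσ_succ] at hint₁ hint₂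
  simp only [hη, hσ_succ, ge_iff_le]
  exact integral_one_div_add_sub_le_of_identDistrib hσ_pos ((hpos k).mono fun _ h => h.le)
    ((hpos (k + 1)).mono fun _ h => h.le) hexch (hηint k hk) hint₁ hint₂

/-- For i.i.d. positive integrable random variables `ζ 0, ζ 1, ...`, with partial sums
`σ k = ζ 0 + ⋯ + ζ (k-1)` and `η k = E[1/σ k]` (assumed finite, i.e. integrable),
the sequence `(η k)` is convex: `η k − η (k+1) ≥ η (k+1) − η (k+2)` for all `k ≥ 1`. -/
theorem harmonic_sums_convex
    {Ω : Type*} [MeasureSpace Ω] [IsProbabilityMeasure (ℙ : Measure Ω)]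
    (ζ : ℕ → Ω → ℝ)
    (hmeas : ∀ i, Measurable (ζ i))
    (hindep : iIndepFun ζ ℙ)
    (hident : ∀ i, IdentDistrib (ζ i) (ζ 0) ℙ ℙ)
    (hpos : ∀ i, ∀ᵐ ω ∂ℙ, 0 < ζ i ω)
    (hint : Integrable (ζ 0) ℙ)
    (σ : ℕ → Ω → ℝ) (hσ : ∀ k ω, σ k ω = ∑ i ∈ Finset.range k, ζ i ω)
    (η : ℕ → ℝ) (hη : ∀ k, η k = ∫ ω, 1 / σ k ω ∂ℙ)
    (hηint : ∀ k, 1 ≤ k → Integrable (fun ω => 1 / σ k ω) ℙ) :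
    ∀ k, 1 ≤ k → η k - η (k + 1) ≥ η (k + 1) - η (k + 2) :=
  harmonic_sums_convex_general ζ hindep hident hpos σ hσ η hη hηint
end

section
/- Let L be a nonnegative integer-valued square integrable random variable, not identically zero, and let m_2 := E[L^2]/E[L]. Define φ_c(s) := c(1 − E[s^L]) − E[L](1 − s^c) for c > 0 and s ∈ [0,1]. Then φ_c(s) ≥ 0 for all s ∈ [0,1] if and only if c ≥ m_2. -/
/-!
Write `s = e^{-t}` and `g(x, t) = c(1 - e^{-xt}) - x(1 - e^{-ct})`, so that `φ_c(s) = E[g(L, t)]`.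

If `c ≥ m₂`: `t ↦ g(x, t) - x(c - x)/c · (1 - e^{-ct}(1 + ct))` vanishes at `0` and has
derivative `cx e^{-ct}(e^{(c-x)t} - 1 - (c-x)t) ≥ 0`, so taking expectations
`φ_c(s) ≥ (c E[L] - E[L²])/c · (1 - e^{-ct}(1 + ct)) ≥ 0`.

If `φ_c ≥ 0`: `g(x, t)/t² → cx(c - x)/2` as `t → 0⁺`, dominated by `(cx² + c²x)/2` since
`0 ≤ e^{-u} - 1 + u ≤ u²/2` for `u ≥ 0`; so by dominated convergence
`0 ≤ φ_c(e^{-t})/t² → c(c E[L] - E[L²])/2`.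
-/

open MeasureTheory ProbabilityTheory Real Filter Set Topology Asymptotics

lemma exp_neg_le_one_sub_add_sq_div_two {u : ℝ} (hu : 0 ≤ u) :
    exp (-u) ≤ 1 - u + u ^ 2 / 2 := by
  have h := sum_le_exp_of_nonneg hu 4
  simp only [Finset.sum_range_succ, Finset.sum_range_zero, Nat.factorial] at h
  norm_num at h
  rw [exp_neg, inv_le_iff_one_le_mul₀ (exp_pos u)]
  nlinarith [sq_nonneg u, pow_nonneg hu 3, pow_nonneg hu 4, pow_nonneg hu 5,
    mul_le_mul_of_nonneg_left h (by nlinarith [sq_nonneg (u - 1)] : (0:ℝ) ≤ 1 - u + u ^ 2 / 2)]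

/-- `φ_c(e^{-t})` for `L` the point mass at `x`. -/
noncomputable def pointPhi (c x t : ℝ) : ℝ :=
  c * (1 - exp (-(x * t))) - x * (1 - exp (-(c * t)))

lemma abs_pointPhi_le {c x t : ℝ} (hc : 0 ≤ c) (hx : 0 ≤ x) (ht : 0 ≤ t) :
    |pointPhi c x t| ≤ (c * x ^ 2 + c ^ 2 * x) / 2 * t ^ 2 := by
  have hxt := exp_neg_le_one_sub_add_sq_div_two (mul_nonneg hx ht)
  have hct := exp_neg_le_one_sub_add_sq_div_two (mul_nonneg hc ht)
  have hxt' := one_sub_le_exp_neg (x * t)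
  have hct' := one_sub_le_exp_neg (c * t)
  rw [abs_le, pointPhi]
  constructor <;> nlinarith [mul_le_mul_of_nonneg_left hxt hc, mul_le_mul_of_nonneg_left hct hx,
    mul_le_mul_of_nonneg_left hxt' hc, mul_le_mul_of_nonneg_left hct' hx]

lemma pointPhi_sub_isLittleO (c x : ℝ) :
    (fun t => pointPhi c x t - c * x * (c - x) / 2 * t ^ 2) =o[𝓝 0] (fun t => t ^ 2) := by
  have taylor (a : ℝ) :
      (fun t => exp (-(a * t)) - (1 - a * t + a ^ 2 / 2 * t ^ 2)) =o[𝓝 0] (fun t => t ^ 2) := by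
    have hlim : Tendsto (fun t : ℝ => -(a * t)) (𝓝 0) (𝓝 0) :=
      (by fun_prop : Continuous fun t : ℝ => -(a * t)).tendsto' 0 0 (by simp)
    refine ((exp_sub_sum_range_succ_isLittleO_pow 2).comp_tendsto hlim).congr_left ?_
      |>.trans_isBigO ?_
    · intro t
      simp only [Function.comp_apply, Finset.sum_range_succ, Finset.sum_range_zero, Nat.factorial]
      push_cast
      ring
    · refine isBigO_iff.2 ⟨a ^ 2, Eventually.of_forall fun t => ?_⟩
      simp [mul_pow]
  refine ((taylor c).const_mul_left x |>.sub ((taylor x).const_mul_left c)).congr_left ?_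
  intro t
  simp only [pointPhi]
  ring

lemma tendsto_pointPhi_div_sq (c x : ℝ) :
    Tendsto (fun t => pointPhi c x t / t ^ 2) (𝓝[>] 0) (𝓝 (c * x * (c - x) / 2)) := by
  have h := ((pointPhi_sub_isLittleO c x).tendsto_div_nhds_zero.mono_left
    (nhdsWithin_le_nhds (s := Ioi 0))).add_const (c * x * (c - x) / 2)
  rw [zero_add] at h
  refine h.congr' ?_
  filter_upwards [self_mem_nhdsWithin] with t (ht : 0 < t)
  field_simp
  ring

lemma mul_sub_div_mul_le_pointPhi {c x t : ℝ} (hc : 0 < c) (hx : 0 ≤ x) (ht : 0 ≤ t) :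
    x * (c - x) / c * (1 - exp (-(c * t)) * (1 + c * t)) ≤ pointPhi c x t := by
  set f : ℝ → ℝ := fun t =>
    pointPhi c x t - x * (c - x) / c * (1 - exp (-(c * t)) * (1 + c * t))
  have hderiv (t : ℝ) :
      HasDerivAt f (c * x * exp (-(c * t)) * (exp ((c - x) * t) - 1 - (c - x) * t)) t := by
    have hx' := ((hasDerivAt_id' t).const_mul x).neg.exp
    have hc' := ((hasDerivAt_id' t).const_mul c).neg.exp
    have hlin := ((hasDerivAt_id' t).const_mul c).const_add 1
    refine ((((hx'.const_sub 1).const_mul c).sub ((hc'.const_sub 1).const_mul x)).sub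
      (((hc'.mul hlin).const_sub 1).const_mul (x * (c - x) / c))).congr_deriv ?_
    have hexp : exp (-(c * t)) * exp ((c - x) * t) = exp (-(x * t)) := by
      rw [← exp_add]; ring_nf
    simp only [Pi.neg_apply, mul_one]
    rw [← hexp]
    field_simp
    ring
  have hmono : Monotone f := by
    refine monotone_of_deriv_nonneg (fun t => (hderiv t).differentiableAt) fun t => ?_
    rw [(hderiv t).deriv]
    have hconvex : 0 ≤ exp ((c - x) * t) - 1 - (c - x) * t := by
      linarith [add_one_le_exp ((c - x) * t)]
    positivity
  have hf0 : f 0 = 0 := by simp [f, pointPhi]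
  have := hmono ht
  rw [hf0] at this
  exact sub_nonneg.1 this

lemma one_sub_rpow_mul_one_sub_mul_log_nonneg {s : ℝ} (hs : 0 ≤ s) (c : ℝ) :
    0 ≤ 1 - s ^ c * (1 - c * log s) := by
  rcases hs.eq_or_lt with rfl | hs
  · -- `log 0 = 0`
    simpa using zero_rpow_le_one c
  · have h := mul_le_mul_of_nonneg_left (one_sub_le_exp_neg (c * log s)) (exp_pos (c * log s)).le
    rw [← exp_add, add_neg_cancel, exp_zero] at h
    rw [rpow_def_of_pos hs, mul_comm (log s)]
    linarith

lemma mul_sub_div_mul_le_of_mem_Icc {c s : ℝ} (hc : 0 < c) (hs : s ∈ Icc 0 1) (n : ℕ) :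
    n * (c - n) / c * (1 - s ^ c * (1 - c * log s)) ≤ c * (1 - s ^ n) - n * (1 - s ^ c) := by
  rcases hs.1.eq_or_lt with rfl | hs0
  · rcases n.eq_zero_or_pos with rfl | hn
    · simp
    · rw [zero_rpow hc.ne', zero_pow hn.ne', div_mul_eq_mul_div, div_le_iff₀ hc]
      nlinarith [sq_nonneg (c - n)]
  · obtain ⟨t, ht, rfl⟩ : ∃ t, 0 ≤ t ∧ s = exp (-t) :=
      ⟨-log s, neg_nonneg.2 (log_nonpos hs.1 hs.2), by rw [neg_neg, exp_log hs0]⟩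
    rw [← exp_nat_mul, ← exp_mul, log_exp]
    have := mul_sub_div_mul_le_pointPhi hc n.cast_nonneg ht
    rw [pointPhi] at this
    convert this using 3 <;> ring_nf

section Moments

variable {Ω : Type*} [MeasurableSpace Ω] {μ : Measure Ω} {L : Ω → ℕ}

lemma integrable_natCast_of_integrable_sq [IsFiniteMeasure μ] (hL : Measurable L)
    (hsq : Integrable (fun ω => (L ω : ℝ) ^ 2) μ) : Integrable (fun ω => (L ω : ℝ)) μ :=
  ((memLp_two_iff_integrable_sq (Measurable.of_discrete.comp hL).aestronglyMeasurable).2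
    hsq).integrable one_le_two

lemma integrable_pow_of_mem_Icc [IsFiniteMeasure μ] (hL : Measurable L) {s : ℝ}
    (hs : s ∈ Icc 0 1) : Integrable (fun ω => s ^ L ω) μ :=
  .of_bound (Measurable.of_discrete.comp hL).aestronglyMeasurable 1 <| .of_forall fun ω => by
    rw [norm_of_nonneg (pow_nonneg hs.1 _)]
    exact pow_le_one₀ hs.1 hs.2

lemma integral_mul_one_sub_pow_sub_mul [IsProbabilityMeasure μ] (hL : Measurable L)
    (hint : Integrable (fun ω => (L ω : ℝ)) μ) {s : ℝ} (hs : s ∈ Icc 0 1) (c b : ℝ) :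
    ∫ ω, (c * (1 - s ^ L ω) - L ω * (1 - b)) ∂μ
      = c * (1 - ∫ ω, s ^ L ω ∂μ) - (∫ ω, (L ω : ℝ) ∂μ) * (1 - b) := by
  have hpow := integrable_pow_of_mem_Icc (μ := μ) hL hs
  have hphi : Integrable (fun ω => c * (1 - s ^ L ω)) μ :=
    ((integrable_const 1).sub hpow).const_mul c
  rw [integral_sub hphi (hint.mul_const _),
    integral_const_mul, integral_mul_const, integral_sub (integrable_const 1) hpow]
  simp

lemma tendsto_integral_pointPhi_div_sq [IsFiniteMeasure μ] (hL : Measurable L)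
    (hsq : Integrable (fun ω => (L ω : ℝ) ^ 2) μ) {c : ℝ} (hc : 0 ≤ c) :
    Tendsto (fun t => ∫ ω, pointPhi c (L ω) t / t ^ 2 ∂μ) (𝓝[>] 0)
      (𝓝 (∫ ω, c * L ω * (c - L ω) / 2 ∂μ)) := by
  refine tendsto_integral_filter_of_dominated_convergence
    (fun ω => (c * (L ω : ℝ) ^ 2 + c ^ 2 * L ω) / 2) (.of_forall fun t =>
      ((Measurable.of_discrete (f := fun n : ℕ => pointPhi c n t / t ^ 2)).comp
        hL).aestronglyMeasurable) ?_ ?_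
    (.of_forall fun ω => tendsto_pointPhi_div_sq c (L ω))
  · filter_upwards [self_mem_nhdsWithin] with t (ht : 0 < t)
    refine .of_forall fun ω => ?_
    rw [norm_div, norm_pow, Real.norm_eq_abs, Real.norm_eq_abs, sq_abs,
      div_le_iff₀ (by positivity)]
    exact abs_pointPhi_le hc (L ω).cast_nonneg ht.le
  · exact ((hsq.const_mul c).add
      ((integrable_natCast_of_integrable_sq hL hsq).const_mul _)).div_const 2

lemma phi_nonneg_of_integral_sq_le [IsProbabilityMeasure μ] (hL : Measurable L)
    (hsq : Integrable (fun ω => (L ω : ℝ) ^ 2) μ) {c : ℝ} (hc : 0 < c)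
    (hle : ∫ ω, (L ω : ℝ) ^ 2 ∂μ ≤ c * ∫ ω, (L ω : ℝ) ∂μ) {s : ℝ}
    (hs : s ∈ Icc 0 1) :
    0 ≤ c * (1 - ∫ ω, s ^ L ω ∂μ) - (∫ ω, (L ω : ℝ) ∂μ) * (1 - s ^ c) := by
  set K := 1 - s ^ c * (1 - c * log s)
  have hint := integrable_natCast_of_integrable_sq hL hsq
  have hmono : ∫ ω, (c * L ω - (L ω : ℝ) ^ 2) / c * K ∂μ
      ≤ ∫ ω, (c * (1 - s ^ L ω) - L ω * (1 - s ^ c)) ∂μ :=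
    integral_mono (((hint.const_mul c).sub hsq).div_const c |>.mul_const K)
      ((((integrable_const 1).sub (integrable_pow_of_mem_Icc hL hs)).const_mul c).sub
        (hint.mul_const _))
      fun ω => (by ring : _ = _).trans_le (mul_sub_div_mul_le_of_mem_Icc hc hs (L ω))
  rw [integral_mul_const, integral_div, integral_sub (hint.const_mul c) hsq, integral_const_mul,
    integral_mul_one_sub_pow_sub_mul hL hint hs] at hmono
  exact (mul_nonneg (div_nonneg (sub_nonneg.2 hle) hc.le)
    (one_sub_rpow_mul_one_sub_mul_log_nonneg hs.1 c)).trans hmono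

lemma integral_sq_le_of_phi_nonneg [IsProbabilityMeasure μ] (hL : Measurable L)
    (hsq : Integrable (fun ω => (L ω : ℝ) ^ 2) μ) {c : ℝ} (hc : 0 < c)
    (h : ∀ s ∈ Icc (0 : ℝ) 1,
      0 ≤ c * (1 - ∫ ω, s ^ L ω ∂μ) - (∫ ω, (L ω : ℝ) ∂μ) * (1 - s ^ c)) :
    ∫ ω, (L ω : ℝ) ^ 2 ∂μ ≤ c * ∫ ω, (L ω : ℝ) ∂μ := by
  have hint := integrable_natCast_of_integrable_sq hL hsq
  have hnonneg : ∀ᶠ t in 𝓝[>] 0, 0 ≤ ∫ ω, pointPhi c (L ω) t / t ^ 2 ∂μ := by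
    filter_upwards [self_mem_nhdsWithin] with t (ht : 0 < t)
    have hs : exp (-t) ∈ Icc 0 1 := ⟨(exp_pos _).le, exp_le_one_iff.2 (by linarith)⟩
    have hphi : ∫ ω, pointPhi c (L ω) t ∂μ
        = c * (1 - ∫ ω, exp (-t) ^ L ω ∂μ)
          - (∫ ω, (L ω : ℝ) ∂μ) * (1 - exp (-t) ^ c) := by
      rw [← integral_mul_one_sub_pow_sub_mul hL hint hs]
      congr with ω
      rw [pointPhi, ← exp_nat_mul, ← exp_mul]
      ring_nf
    rw [integral_div, hphi]
    exact div_nonneg (h _ hs) (sq_nonneg t)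
  have hlim := ge_of_tendsto (tendsto_integral_pointPhi_div_sq hL hsq hc.le) hnonneg
  have hval : ∫ ω, c * L ω * (c - L ω) / 2 ∂μ
      = c * (c * ∫ ω, (L ω : ℝ) ∂μ - ∫ ω, (L ω : ℝ) ^ 2 ∂μ) / 2 := by
    rw [← integral_const_mul, ← integral_sub (hint.const_mul c) hsq, ← integral_const_mul,
      ← integral_div]
    congr with ω
    ring
  rw [hval] at hlim
  nlinarith

end Moments

/-- Let `L` be a nonnegative integer-valued square-integrable random variable, not identically
zero, and `m₂ := E[L²]/E[L]`.  With `φ_c(s) := c(1 − E[s^L]) − E[L](1 − s^c)` for `c > 0`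
(`s^c` is the real power `Real.rpow`, with `0^c = 0`), one has
`φ_c(s) ≥ 0` for all `s ∈ [0,1]` if and only if `c ≥ m₂`. -/
theorem phi_nonneg_iff_ge_m2
    {Ω : Type*} [MeasureSpace Ω] [IsProbabilityMeasure (ℙ : Measure Ω)]
    (L : Ω → ℕ) (hL : Measurable L)
    (hsq : Integrable (fun ω => ((L ω : ℝ)) ^ 2) ℙ)
    (hpos : 0 < ∫ ω, (L ω : ℝ) ∂ℙ)
    (c : ℝ) (hc : 0 < c) :
    (∀ s ∈ Set.Icc (0 : ℝ) 1,
        0 ≤ c * (1 - ∫ ω, s ^ (L ω) ∂ℙ) - (∫ ω, (L ω : ℝ) ∂ℙ) * (1 - s ^ c)) ↔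
      (∫ ω, (L ω : ℝ) ^ 2 ∂ℙ) / (∫ ω, (L ω : ℝ) ∂ℙ) ≤ c := by
  rw [div_le_iff₀ hpos]
  exact ⟨integral_sq_le_of_phi_nonneg hL hsq hc,
    fun hle _ hs => phi_nonneg_of_integral_sq_le hL hsq hc hle hs⟩
end

section
/- Let X be a nonnegative, not identically zero, integrable integer-valued random variable. Define S_0 := 0, S_n := X_1 + ... + X_n for i.i.d. copies X_i of X, and R_n(x) := ∏_{i=0}^n (1 + E[X]/(x + S_i)) for x > 0. Then E[R_n(x)] ≥ 1 + (n+1)·E[X]/x. -/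
/-!
Induct on the number of factors, conditioning on the first summand `X₀`. The first factor is
`1 + m / x`, and the remaining product is the same product for the shifted sequence started at
`x + X₀`; since `X₀` is independent of that sequence, the induction hypothesis bounds its
expectation below by `E[1 + n m / (x + X₀)]`. Jensen's inequality for the convex function
`t ↦ 1 / (x + t)` bounds this below by `1 + n m / (x + m)`, and
`(1 + m / x) (1 + n m / (x + m)) = 1 + (n + 1) m / x` exactly.
-/

open MeasureTheory ProbabilityTheory Finset

namespace ProbabilityTheory

variable {Ω α β : Type*} [MeasurableSpace Ω] [MeasurableSpace α] [MeasurableSpace β]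
  {μ : Measure Ω} [IsFiniteMeasure μ] {Z : Ω → α} {W : Ω → β} {G : α → β → ℝ}

lemma IndepFun.integrable_uncurry_prod_map (hZW : IndepFun Z W μ) (hZ : AEMeasurable Z μ)
    (hW : AEMeasurable W μ) (hG : StronglyMeasurable (Function.uncurry G))
    (hGi : Integrable (fun ω => G (Z ω) (W ω)) μ) :
    Integrable (Function.uncurry G) ((μ.map Z).prod (μ.map W)) := by
  rw [← hZW.map_prod_eq_prod_map_map hZ hW,
    integrable_map_measure hG.aestronglyMeasurable (hZ.prodMk hW)]
  exact hGi

lemma IndepFun.integral_comp_eq_integral_integral (hZW : IndepFun Z W μ) (hZ : AEMeasurable Z μ)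
    (hW : AEMeasurable W μ) (hG : StronglyMeasurable (Function.uncurry G))
    (hGi : Integrable (fun ω => G (Z ω) (W ω)) μ) :
    ∫ ω, G (Z ω) (W ω) ∂μ = ∫ ω', ∫ ω, G (Z ω') (W ω) ∂μ ∂μ := by
  have hGW : ∀ a, StronglyMeasurable (G a) := fun a =>
    hG.comp_measurable measurable_prodMk_left
  change ∫ ω, Function.uncurry G (Z ω, W ω) ∂μ = _
  rw [← integral_map (hZ.prodMk hW) hG.aestronglyMeasurable,
    hZW.map_prod_eq_prod_map_map hZ hW,
    integral_prod _ (hZW.integrable_uncurry_prod_map hZ hW hG hGi),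
    integral_map hZ hG.integral_prod_right'.aestronglyMeasurable]
  simp only [Function.uncurry_apply_pair]
  exact integral_congr_ae (ae_of_all _ fun ω' => integral_map hW (hGW _).aestronglyMeasurable)

lemma IndepFun.integrable_integral_comp (hZW : IndepFun Z W μ) (hZ : AEMeasurable Z μ)
    (hW : AEMeasurable W μ) (hG : StronglyMeasurable (Function.uncurry G))
    (hGi : Integrable (fun ω => G (Z ω) (W ω)) μ) :
    Integrable (fun ω' => ∫ ω, G (Z ω') (W ω) ∂μ) μ := by
  have hGW : ∀ a, StronglyMeasurable (G a) := fun a =>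
    hG.comp_measurable measurable_prodMk_left
  have := (hZW.integrable_uncurry_prod_map hZ hW hG hGi).integral_prod_left
  rw [integrable_map_measure hG.integral_prod_right'.aestronglyMeasurable hZ] at this
  simpa [Function.comp_def, integral_map hW (hGW _).aestronglyMeasurable] using this

omit [IsFiniteMeasure μ] in
lemma iIndepFun.indepFun_zero_tail {X : ℕ → Ω → α} (hX : iIndepFun X μ)
    (hmeas : ∀ i, Measurable (X i)) : IndepFun (X 0) (fun ω i => X (i + 1) ω) μ := by
  rw [IndepFun_iff_Indep]
  have h := indep_iSup_of_disjoint (fun i => (hmeas i).comap_le) hX.iIndep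
    (S := {0}) (T := Set.Ioi 0) (by simp)
  refine indep_of_indep_of_le_right (indep_of_indep_of_le_left h ?_) ?_
  · exact le_iSup₂ (f := fun i (_ : i ∈ ({0} : Set ℕ)) => MeasurableSpace.comap (X i) _) 0 rfl
  · refine Measurable.comap_le
      (@measurable_pi_lambda Ω ℕ (fun _ => α) (⨆ i ∈ Set.Ioi 0, MeasurableSpace.comap (X i) _) _
        _ fun i => ?_)
    exact (comap_measurable (X (i + 1))).mono
      (le_iSup₂ (f := fun i (_ : i ∈ Set.Ioi 0) => MeasurableSpace.comap (X i) _) (i + 1)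
        i.succ_pos) le_rfl

end ProbabilityTheory

section

variable {Ω : Type*} [MeasurableSpace Ω] {μ : Measure Ω} {Z : Ω → ℝ} {y : ℝ}

lemma integrable_inv_const_add [IsFiniteMeasure μ] (hZ : AEMeasurable Z μ) (hZ0 : 0 ≤ᵐ[μ] Z)
    (hy : 0 < y) : Integrable (fun ω => (y + Z ω)⁻¹) μ := by
  refine (integrable_const y⁻¹).mono' (hZ.const_add y).inv.aestronglyMeasurable ?_
  filter_upwards [hZ0] with ω hω
  have : y ≤ y + Z ω := by simpa using hω
  rw [Real.norm_of_nonneg (inv_nonneg.mpr (hy.le.trans this))]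
  exact inv_anti₀ hy this

lemma inv_add_integral_le_integral_inv_add [IsProbabilityMeasure μ] (hZ : Integrable Z μ)
    (hZ0 : 0 ≤ᵐ[μ] Z) (hy : 0 < y) : (y + ∫ ω, Z ω ∂μ)⁻¹ ≤ ∫ ω, (y + Z ω)⁻¹ ∂μ := by
  have hpos : Set.Ici y ⊆ Set.Ioi 0 := fun t ht => hy.trans_le ht
  have hconv : ConvexOn ℝ (Set.Ici y) fun t : ℝ => t⁻¹ := by
    simpa using (convexOn_zpow (𝕜 := ℝ) (-1)).subset hpos (convex_Ici y)
  have hmem : ∀ᵐ ω ∂μ, y + Z ω ∈ Set.Ici y := by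
    filter_upwards [hZ0] with ω hω
    simpa using hω
  have hyZ : Integrable (fun ω => y + Z ω) μ := (integrable_const y).add hZ
  have := hconv.map_integral_le (continuousOn_inv₀.mono fun t ht => (hpos ht).ne')
    isClosed_Ici hmem hyZ (integrable_inv_const_add hZ.aemeasurable hZ0 hy)
  simpa [integral_add (integrable_const y) hZ] using this

lemma one_add_div_add_integral_le [IsProbabilityMeasure μ] (hZ : Integrable Z μ)
    (hZ0 : 0 ≤ᵐ[μ] Z) (hy : 0 < y) {c : ℝ} (hc : 0 ≤ c) :
    1 + c / (y + ∫ ω, Z ω ∂μ) ≤ ∫ ω, (1 + c / (y + Z ω)) ∂μ := by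
  have hinv := integrable_inv_const_add hZ.aemeasurable hZ0 hy
  simp_rw [div_eq_mul_inv c]
  rw [integral_add (integrable_const 1) (hinv.const_mul c), integral_const_mul]
  simpa using mul_le_mul_of_nonneg_left (inv_add_integral_le_integral_inv_add hZ hZ0 hy) hc

end

noncomputable def partialSumProd (m y : ℝ) (v : ℕ → ℝ) (k : ℕ) : ℝ :=
  ∏ i ∈ range k, (1 + m / (y + ∑ j ∈ range i, v j))

section partialSumProd

variable {m y : ℝ} {v : ℕ → ℝ}

lemma partialSumProd_succ (m y : ℝ) (v : ℕ → ℝ) (k : ℕ) :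
    partialSumProd m y v (k + 1) =
      (1 + m / y) * partialSumProd m (y + v 0) (fun j => v (j + 1)) k := by
  simp only [partialSumProd, prod_range_succ', sum_range_succ', range_zero, sum_empty, add_zero]
  rw [mul_comm]
  congr 1
  refine prod_congr rfl fun i _ => ?_
  ring

lemma one_le_one_add_div_add_sum (hm : 0 ≤ m) (hy : 0 < y) (hv : ∀ j, 0 ≤ v j) (i : ℕ) :
    1 ≤ 1 + m / (y + ∑ j ∈ range i, v j) := by
  have := sum_nonneg fun j (_ : j ∈ range i) => hv j
  have : 0 ≤ m / (y + ∑ j ∈ range i, v j) := by positivity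
  linarith

lemma partialSumProd_nonneg (hm : 0 ≤ m) (hy : 0 < y) (hv : ∀ j, 0 ≤ v j) (k : ℕ) :
    0 ≤ partialSumProd m y v k :=
  prod_nonneg fun i _ => zero_le_one.trans (one_le_one_add_div_add_sum hm hy hv i)

lemma partialSumProd_le_pow (hm : 0 ≤ m) (hy : 0 < y) (hv : ∀ j, 0 ≤ v j) (k : ℕ) :
    partialSumProd m y v k ≤ (1 + m / y) ^ k := by
  calc partialSumProd m y v k ≤ ∏ _i ∈ range k, (1 + m / y) := by
        refine prod_le_prod (fun i _ => zero_le_one.trans (one_le_one_add_div_add_sum hm hy hv i))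
          fun i _ => ?_
        have := sum_nonneg fun j (_ : j ∈ range i) => hv j
        gcongr
        linarith
    _ = (1 + m / y) ^ k := by simp

lemma measurable_partialSumProd (m : ℝ) (k : ℕ) :
    Measurable fun p : ℝ × (ℕ → ℝ) => partialSumProd m p.1 p.2 k := by
  unfold partialSumProd
  fun_prop

end partialSumProd

section

variable {Ω : Type*} [MeasurableSpace Ω] {μ : Measure Ω}

lemma integrable_partialSumProd [IsFiniteMeasure μ] {X : ℕ → Ω → ℝ} (hmeas : ∀ i, Measurable (X i))
    (hnonneg : ∀ i ω, 0 ≤ X i ω) {m y : ℝ} (hm : 0 ≤ m) (hy : 0 < y) (k : ℕ) :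
    Integrable (fun ω => partialSumProd m y (fun j => X j ω) k) μ := by
  refine (integrable_const ((1 + m / y) ^ k)).mono' ?_ (ae_of_all _ fun ω => ?_)
  · exact ((measurable_partialSumProd m k).comp
      (measurable_const.prodMk (measurable_pi_lambda _ hmeas))).aestronglyMeasurable
  · rw [Real.norm_of_nonneg (partialSumProd_nonneg hm hy (hnonneg · ω) k)]
    exact partialSumProd_le_pow hm hy (hnonneg · ω) k

theorem one_add_mul_div_le_integral_partialSumProd [IsProbabilityMeasure μ] {X : ℕ → Ω → ℝ} {m : ℝ}
    (hmeas : ∀ i, Measurable (X i)) (hindep : iIndepFun X μ) (hnonneg : ∀ i ω, 0 ≤ X i ω)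
    (hint : ∀ i, Integrable (X i) μ) (hmean : ∀ i, ∫ ω, X i ω ∂μ = m) (k : ℕ) {y : ℝ}
    (hy : 0 < y) : 1 + k * m / y ≤ ∫ ω, partialSumProd m y (fun j => X j ω) k ∂μ := by
  have hm : 0 ≤ m := hmean 0 ▸ integral_nonneg (hnonneg 0)
  induction k generalizing X y with
  | zero => simp [partialSumProd]
  | succ k ih =>
    set G : ℝ → (ℕ → ℝ) → ℝ := fun a v => partialSumProd m (y + a) v k
    have hG : StronglyMeasurable (Function.uncurry G) :=
      ((measurable_partialSumProd m k).comp
        ((measurable_const.add measurable_fst).prodMk measurable_snd)).stronglyMeasurable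
    have hindep_tail := hindep.indepFun_zero_tail hmeas
    have hhead_meas : AEMeasurable (X 0) μ := (hmeas 0).aemeasurable
    have htail_meas : AEMeasurable (fun ω i => X (i + 1) ω) μ :=
      (measurable_pi_lambda _ fun i => hmeas _).aemeasurable
    have hGi : Integrable (fun ω => G (X 0 ω) (fun i => X (i + 1) ω)) μ := by
      refine ((integrable_partialSumProd hmeas hnonneg hm hy (k + 1)).const_mul (1 + m / y)⁻¹).congr
        (ae_of_all _ fun ω => ?_)
      have : 1 + m / y ≠ 0 := by positivity
      simp only [partialSumProd_succ, G]
      field_simp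
    have hsection : ∀ ω', 1 + k * m / (y + X 0 ω') ≤ ∫ ω, G (X 0 ω') (fun i => X (i + 1) ω) ∂μ :=
      fun ω' => ih (fun i => hmeas _) (hindep.precomp Nat.succ_injective) (fun i => hnonneg _)
        (fun i => hint _) (fun i => hmean _) (add_pos_of_pos_of_nonneg hy (hnonneg 0 ω'))
    have hjensen := one_add_div_add_integral_le (hint 0) (ae_of_all _ (hnonneg 0)) hy
      (mul_nonneg k.cast_nonneg hm)
    rw [hmean 0] at hjensen
    calc (1 : ℝ) + (k + 1 : ℕ) * m / y = (1 + m / y) * (1 + k * m / (y + m)) := by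
          field_simp
          push_cast
          ring
      _ ≤ (1 + m / y) * ∫ ω, (1 + k * m / (y + X 0 ω)) ∂μ := by gcongr
      _ ≤ (1 + m / y) * ∫ ω', ∫ ω, G (X 0 ω') (fun i => X (i + 1) ω) ∂μ ∂μ := by
          gcongr (1 + m / y) * ?_
          exact integral_mono_of_nonneg (ae_of_all _ fun ω => by positivity [hnonneg 0 ω])
            (hindep_tail.integrable_integral_comp hhead_meas htail_meas hG hGi)
            (ae_of_all _ hsection)
      _ = ∫ ω, partialSumProd m y (fun j => X j ω) (k + 1) ∂μ := by
          rw [← hindep_tail.integral_comp_eq_integral_integral hhead_meas htail_meas hG hGi,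
            ← integral_const_mul]
          simp only [partialSumProd_succ, G]

end

theorem product_expectation_lower_bound_general
    {Ω : Type*} [MeasureSpace Ω] [IsProbabilityMeasure (ℙ : Measure Ω)]
    (X : ℕ → Ω → ℕ)
    (hmeas : ∀ i, Measurable (X i))
    (hindep : iIndepFun X ℙ)
    (hident : ∀ i, IdentDistrib (X i) (X 0) ℙ ℙ)
    (hint : Integrable (fun ω => (X 0 ω : ℝ)) ℙ)
    (m : ℝ) (hm : m = ∫ ω, (X 0 ω : ℝ) ∂ℙ)
    (S : ℕ → Ω → ℝ) (hS : ∀ i ω, S i ω = ∑ j ∈ Finset.range i, (X j ω : ℝ))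
    (x : ℝ) (hx : 0 < x) (n : ℕ) :
    1 + (n + 1) * m / x ≤
      ∫ ω, ∏ i ∈ Finset.range (n + 1), (1 + m / (x + S i ω)) ∂ℙ := by
  have hcast : Measurable (Nat.cast : ℕ → ℝ) := measurable_from_top
  have h := one_add_mul_div_le_integral_partialSumProd (μ := ℙ) (X := fun i ω => (X i ω : ℝ))
    (fun i => hcast.comp (hmeas i)) (hindep.comp _ fun _ => hcast)
    (fun i ω => Nat.cast_nonneg _) (fun i => ((hident i).comp hcast).integrable_iff.mpr hint)
    (fun i => hm ▸ ((hident i).comp hcast).integral_eq) (n + 1) hx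
  simp only [partialSumProd, ← hS] at h
  exact_mod_cast h

/-- Let `X 0, X 1, ...` be i.i.d. nonnegative integrable integer-valued random variables, not
identically zero, with partial sums `S i` (`S 0 = 0`) and
`R_n(x) := ∏_{i=0}^{n} (1 + E[X]/(x + S i))` for `x > 0`.
Then `E[R_n(x)] ≥ 1 + (n+1)·E[X]/x`. -/
theorem product_expectation_lower_bound
    {Ω : Type*} [MeasureSpace Ω] [IsProbabilityMeasure (ℙ : Measure Ω)]
    (X : ℕ → Ω → ℕ)
    (hmeas : ∀ i, Measurable (X i))
    (hindep : iIndepFun X ℙ)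
    (hident : ∀ i, IdentDistrib (X i) (X 0) ℙ ℙ)
    (hint : Integrable (fun ω => (X 0 ω : ℝ)) ℙ)
    (hnz : ℙ {ω | X 0 ω = 0} < 1)
    (m : ℝ) (hm : m = ∫ ω, (X 0 ω : ℝ) ∂ℙ)
    (S : ℕ → Ω → ℝ) (hS : ∀ i ω, S i ω = ∑ j ∈ Finset.range i, (X j ω : ℝ))
    (x : ℝ) (hx : 0 < x) (n : ℕ) :
    1 + (n + 1) * m / x ≤
      ∫ ω, ∏ i ∈ Finset.range (n + 1), (1 + m / (x + S i ω)) ∂ℙ :=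
  product_expectation_lower_bound_general X hmeas hindep hident hint m hm S hS x hx n
end

section
/- Let X be a nonnegative integrable random variable with r := P(X = 0) ∈ (0,1), and let m_0 := E[X]·r/(1−r). If 0 < x ≤ m_0, then limsup_n E[R_n(x)]/n = ∞, where R_n(x) := ∏_{i=0}^n (1 + E[X]/(x + S_i)) and S_i are the partial sums of i.i.d. copies of X. -/
/-!
Write `ρ = 1 + m/x`; for `r < 1` the hypothesis `x ≤ m₀` is equivalent to `r ρ ≥ 1`. Choose `C`
with `q = P(0 < X ≤ C) > 0` and let `B_k` be the event `X₀ = ⋯ = X_{k-1} = 0 < X_k ≤ C`. These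
events are disjoint and `P(B_k) = r^k q`; on `B_k` the first `k + 1` factors of `R_n(x)` equal `ρ`
and the remaining product is at least `∑_j m / (x + C + X_{k+1} + ⋯ + X_{k+j})`. By Markov's
inequality, independently of `B_k`, the `j`-th tail sum is at most `2m(j+1)` with probability at
least `1/2`. So each of the `≈ n/2` events `B_k` with `k < n/2` contributes at least
`(q/2) ∑_{j < n/2} m / (x + C + 2m(j+1)) ≍ log n` to `E[R_n(x)]`.
-/

open MeasureTheory ProbabilityTheory Finset Filter Function

lemma sum_le_prod_one_add {ι : Type*} (s : Finset ι) {c : ι → ℝ} (hc : ∀ i ∈ s, 0 ≤ c i) :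
    ∑ i ∈ s, c i ≤ ∏ i ∈ s, (1 + c i) := by
  classical
  induction s using Finset.induction_on with
  | empty => simp
  | insert a s ha ih =>
    rw [sum_insert ha, prod_insert ha]
    have hca := hc a (mem_insert_self a s)
    have ih := ih fun i hi => hc i (mem_insert_of_mem hi)
    have : 1 ≤ ∏ i ∈ s, (1 + c i) :=
      one_le_prod fun i hi => le_add_of_nonneg_right (hc i (mem_insert_of_mem hi))
    nlinarith

lemma prod_range_mul_sum_le_prod_range {c : ℕ → ℝ} (hc : ∀ i, 0 ≤ c i) {k J N : ℕ}
    (h : k + J ≤ N) :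
    (∏ i ∈ range k, (1 + c i)) * ∑ j ∈ range J, c (k + j) ≤ ∏ i ∈ range N, (1 + c i) :=
  have hc1 : ∀ i, 1 ≤ 1 + c i := fun i => le_add_of_nonneg_right (hc i)
  calc _ ≤ (∏ i ∈ range k, (1 + c i)) * ∏ j ∈ range J, (1 + c (k + j)) := by
        gcongr
        · exact prod_nonneg fun i _ => zero_le_one.trans (hc1 i)
        · exact sum_le_prod_one_add _ fun j _ => hc _
    _ = ∏ i ∈ range (k + J), (1 + c i) := (prod_range_add _ k J).symm
    _ ≤ _ := prod_le_prod_of_subset_of_one_le (range_subset_range.2 h)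
        (fun i _ => zero_le_one.trans (hc1 i)) fun i _ _ => hc1 i

lemma tendsto_sum_range_div_add_mul_succ_atTop {b c d : ℝ} (hb : 0 < b) (hc : 0 < c)
    (hd : 0 ≤ d) : Tendsto (fun J : ℕ => ∑ j ∈ range J, b / (d + c * (j + 1))) atTop atTop := by
  have hbdc : 0 < b / (d + c) := by positivity
  refine tendsto_atTop_mono (fun J => ?_)
    (Real.tendsto_sum_range_one_div_nat_succ_atTop.const_mul_atTop hbdc)
  rw [mul_sum]
  gcongr with j
  rw [div_mul_div_comm, mul_one]
  gcongr
  nlinarith [j.cast_nonneg (α := ℝ)]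

lemma half_le_measureReal_le {Ω : Type*} {_ : MeasurableSpace Ω} {μ : Measure Ω}
    [IsProbabilityMeasure μ] {Y : Ω → ℝ} (hY : 0 ≤ᵐ[μ] Y) (hint : Integrable Y μ) {t : ℝ}
    (ht : 0 < t) (hYt : 2 * ∫ ω, Y ω ∂μ ≤ t) : 1 / 2 ≤ μ.real {ω | Y ω ≤ t} := by
  have markov := mul_meas_ge_le_integral_of_nonneg hY hint t
  have cover : 1 ≤ μ.real {ω | Y ω ≤ t} + μ.real {ω | t ≤ Y ω} :=
    calc (1 : ℝ) = μ.real Set.univ := by simp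
      _ ≤ μ.real ({ω | Y ω ≤ t} ∪ {ω | t ≤ Y ω}) :=
        measureReal_mono fun ω _ => le_total (Y ω) t
      _ ≤ _ := measureReal_union_le _ _
  nlinarith

lemma sum_le_of_pairwise_disjoint {ι α : Type*} {s : Finset ι} {B : ι → Set α}
    (hB : Pairwise (Disjoint on B)) {f : ι → ℝ} {b : ℝ} {a : α}
    (hf0 : ∀ i ∈ s, a ∉ B i → f i = 0) (hb : 0 ≤ b) (hfb : ∀ i ∈ s, a ∈ B i → f i ≤ b) :
    ∑ i ∈ s, f i ≤ b := by
  by_cases h : ∃ i ∈ s, a ∈ B i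
  · obtain ⟨i, hi, ha⟩ := h
    rw [sum_eq_single_of_mem i hi fun i' hi' hne =>
      hf0 i' hi' fun ha' => Set.disjoint_left.1 (hB hne) ha' ha]
    exact hfb i hi ha
  · push Not at h
    rw [sum_eq_zero fun i hi => hf0 i hi (h i hi)]
    exact hb

lemma one_le_mul_one_add_div {m r x : ℝ} (hx : 0 < x) (hr1 : r < 1)
    (hxm : x ≤ m * r / (1 - r)) : 1 ≤ r * (1 + m / x) := by
  rw [le_div_iff₀ (by linarith)] at hxm
  rw [mul_one_add, ← mul_div_assoc, ← sub_le_iff_le_add', le_div_iff₀ hx]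
  linarith

lemma exists_measure_preimage_Ioc_pos {Ω : Type*} {_ : MeasurableSpace Ω} {μ : Measure Ω}
    [IsProbabilityMeasure μ] {Y : Ω → ℝ} (hY : 0 ≤ᵐ[μ] Y) (h : μ {ω | Y ω = 0} < 1) :
    ∃ C : ℝ, 0 ≤ C ∧ 0 < μ (Y ⁻¹' Set.Ioc 0 C) := by
  by_contra! hC
  have hzero : ∀ᵐ ω ∂μ, Y ω = 0 := by
    have hC' : ∀ᵐ ω ∂μ, ∀ C : ℕ, Y ω ∉ Set.Ioc 0 (C : ℝ) :=
      ae_all_iff.2 fun C =>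
        measure_eq_zero_iff_ae_notMem.1 (nonpos_iff_eq_zero.1 (hC C C.cast_nonneg))
    filter_upwards [hY, hC'] with ω h0 hC'
    obtain ⟨C, hC⟩ := exists_nat_ge (Y ω)
    by_contra hne
    exact hC' C ⟨lt_of_le_of_ne h0 (Ne.symm hne), hC⟩
  rw [measure_congr (ae_eq_univ (s := {ω | Y ω = 0}).2 (ae_iff.1 hzero)), measure_univ] at h
  exact lt_irrefl _ h

section RandomWalk

variable {Ω : Type*} {X : ℕ → Ω → ℝ}

/-- The paper's `R_n(x)` along the path `ω`, with `S_i = ∑_{l<i} X_l`. -/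
noncomputable def walkProduct (X : ℕ → Ω → ℝ) (m x : ℝ) (n : ℕ) (ω : Ω) : ℝ :=
  ∏ i ∈ range (n + 1), (1 + m / (x + ∑ l ∈ range i, X l ω))

def firstJump (X : ℕ → Ω → ℝ) (C : ℝ) (k : ℕ) : Set Ω :=
  ⋂ i ∈ range (k + 1), X i ⁻¹' if i < k then {0} else Set.Ioc 0 C

def tailSumLE (X : ℕ → Ω → ℝ) (k j : ℕ) (t : ℝ) : Set Ω :=
  {ω | ∑ l ∈ range j, X (k + 1 + l) ω ≤ t}

lemma mem_firstJump {C : ℝ} {k : ℕ} {ω : Ω} :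
    ω ∈ firstJump X C k ↔ (∀ i < k, X i ω = 0) ∧ X k ω ∈ Set.Ioc 0 C := by
  simp only [firstJump, Set.mem_iInter, mem_range, Set.mem_preimage]
  constructor
  · intro h
    exact ⟨fun i hi => by simpa [hi] using h i (by omega), by simpa using h k (by omega)⟩
  · rintro ⟨h0, hk⟩ i hi
    rcases Nat.lt_succ_iff_lt_or_eq.1 hi with hi | rfl
    · simpa [hi] using h0 i hi
    · simpa using hk

lemma walkProduct_mem_Icc {m x : ℝ} (hm : 0 ≤ m) (hx : 0 < x) (n : ℕ) {ω : Ω}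
    (hX : ∀ i, 0 ≤ X i ω) : walkProduct X m x n ω ∈ Set.Icc 0 ((1 + m / x) ^ (n + 1)) := by
  have hpos : ∀ i, 0 < x + ∑ l ∈ range i, X l ω := fun i =>
    add_pos_of_pos_of_nonneg hx (sum_nonneg fun l _ => hX l)
  have hfac : ∀ i, 0 ≤ 1 + m / (x + ∑ l ∈ range i, X l ω) := fun i => by
    have := hpos i; positivity
  refine ⟨prod_nonneg fun i _ => hfac i, ?_⟩
  calc walkProduct X m x n ω ≤ ∏ _i ∈ range (n + 1), (1 + m / x) :=
        prod_le_prod (fun i _ => hfac i) fun i _ => by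
          gcongr; exact le_add_of_nonneg_right (sum_nonneg fun l _ => hX l)
    _ = (1 + m / x) ^ (n + 1) := by rw [prod_const, card_range]

lemma pairwise_disjoint_firstJump (C : ℝ) : Pairwise (Disjoint on firstJump X C) := by
  refine (pairwise_disjoint_on _).2 fun k k' hkk' => Set.disjoint_left.2 fun ω hk hk' => ?_
  exact (mem_firstJump.1 hk).2.1.ne' ((mem_firstJump.1 hk').1 k hkk')

lemma pow_mul_sum_indicator_le_walkProduct {m x C : ℝ} (hm : 0 ≤ m) (hx : 0 < x) {k J n : ℕ}
    (hJ : k + 1 + J ≤ n + 1) (t : ℕ → ℝ) {ω : Ω} (hX : ∀ i, 0 ≤ X i ω)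
    (hω : ω ∈ firstJump X C k) :
    (1 + m / x) ^ (k + 1) * ∑ j ∈ range J,
      (firstJump X C k ∩ tailSumLE X k j (t j)).indicator (fun _ => m / (x + C + t j)) ω ≤
      walkProduct X m x n ω := by
  obtain ⟨hzero, -, hC⟩ := mem_firstJump.1 hω
  set c : ℕ → ℝ := fun i => m / (x + ∑ l ∈ range i, X l ω) with hc_def
  have hpos : ∀ i, 0 < x + ∑ l ∈ range i, X l ω := fun i =>
    add_pos_of_pos_of_nonneg hx (sum_nonneg fun l _ => hX l)
  have hS : ∀ i ≤ k, ∑ l ∈ range i, X l ω = 0 := fun i hi =>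
    sum_eq_zero fun l hl => hzero l (by rw [mem_range] at hl; omega)
  have hprefix : ∏ i ∈ range (k + 1), (1 + c i) = (1 + m / x) ^ (k + 1) := by
    rw [prod_eq_pow_card (b := 1 + m / x) fun i hi => by
      simp only [hc_def, hS i (mem_range_succ_iff.1 hi), add_zero], card_range]
  have hterm : ∀ j, (firstJump X C k ∩ tailSumLE X k j (t j)).indicator
      (fun _ => m / (x + C + t j)) ω ≤ c (k + 1 + j) := by
    intro j
    by_cases hD : ω ∈ firstJump X C k ∩ tailSumLE X k j (t j)
    · rw [Set.indicator_of_mem hD]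
      have hsum : ∑ l ∈ range (k + 1 + j), X l ω ≤ C + t j := by
        rw [sum_range_add, sum_range_succ, hS k le_rfl, zero_add]
        exact add_le_add hC hD.2
      exact div_le_div_of_nonneg_left hm (hpos _) (by linarith)
    · rw [Set.indicator_of_notMem hD]
      exact div_nonneg hm (hpos _).le
  calc _ ≤ (∏ i ∈ range (k + 1), (1 + c i)) * ∑ j ∈ range J, c (k + 1 + j) := by
        rw [hprefix]; gcongr with j; exact hterm j
    _ ≤ walkProduct X m x n ω :=
      prod_range_mul_sum_le_prod_range (fun i => div_nonneg hm (hpos i).le) hJ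

lemma measurableSet_firstJump [MeasurableSpace Ω] (hmeas : ∀ i, Measurable (X i)) (C : ℝ) (k : ℕ) :
    MeasurableSet (firstJump X C k) :=
  MeasurableSet.biInter (Set.to_countable _) fun i _ =>
    hmeas i (by split_ifs <;> measurability)

lemma measurableSet_tailSumLE [MeasurableSpace Ω] (hmeas : ∀ i, Measurable (X i)) (k j : ℕ)
    (t : ℝ) :
    MeasurableSet (tailSumLE X k j t) :=
  measurableSet_le (Finset.measurable_sum _ fun _ _ => hmeas _) measurable_const

variable [MeasureSpace Ω]

lemma measure_firstJump (hindep : iIndepFun X ℙ)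
    (hident : ∀ i, IdentDistrib (X i) (X 0) ℙ ℙ) (C : ℝ) (k : ℕ) :
    ℙ (firstJump X C k) = ℙ (X 0 ⁻¹' {0}) ^ k * ℙ (X 0 ⁻¹' Set.Ioc 0 C) := by
  rw [firstJump, hindep.measure_inter_preimage_eq_mul _ fun i _ => by split_ifs <;> measurability,
    prod_range_succ, if_neg (lt_irrefl k), (hident k).measure_mem_eq measurableSet_Ioc,
    prod_congr rfl fun i hi => by rw [if_pos (mem_range.1 hi),
      (hident i).measure_mem_eq (measurableSet_singleton 0)], prod_const, card_range]

lemma measure_firstJump_inter_tailSumLE (hmeas : ∀ i, Measurable (X i)) (hindep : iIndepFun X ℙ)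
    (C t : ℝ) (k j : ℕ) :
    ℙ (firstJump X C k ∩ tailSumLE X k j t) = ℙ (firstJump X C k) * ℙ (tailSumLE X k j t) := by
  have hind := indep_iSup_of_disjoint (fun i => (hmeas i).comap_le)
    ((iIndepFun_iff_iIndep _ _ _).1 hindep) (Set.Iic_disjoint_Ioi (le_refl k))
  refine (Indep_iff _ _ _).1 hind _ _ ?_ ?_
  · refine MeasurableSet.biInter (Set.to_countable _) fun i hi => ?_
    exact Measurable.of_comap_le (le_iSup₂ (f := fun i (_ : i ∈ Set.Iic k) =>
      MeasurableSpace.comap (X i) inferInstance) i (Set.mem_Iic.2 (mem_range_succ_iff.1 hi)))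
      (by split_ifs <;> measurability)
  · refine measurableSet_le (Finset.measurable_sum _ fun l _ => ?_) measurable_const
    exact Measurable.of_comap_le (le_iSup₂ (f := fun i (_ : i ∈ Set.Ioi k) =>
      MeasurableSpace.comap (X i) inferInstance) (k + 1 + l) (Set.mem_Ioi.2 (by omega)))

lemma integrable_walkProduct [IsProbabilityMeasure (ℙ : Measure Ω)]
    (hmeas : ∀ i, Measurable (X i)) (hnonneg : ∀ i, ∀ᵐ ω ∂ℙ, 0 ≤ X i ω) {m x : ℝ} (hm : 0 ≤ m)
    (hx : 0 < x) (n : ℕ) : Integrable (walkProduct X m x n) ℙ := by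
  refine Integrable.of_bound (C := (1 + m / x) ^ (n + 1)) ?_ ?_
  · exact (by unfold walkProduct; fun_prop : Measurable _).aestronglyMeasurable
  · filter_upwards [ae_all_iff.2 hnonneg] with ω hω
    obtain ⟨h0, h1⟩ := walkProduct_mem_Icc hm hx n hω
    rwa [Real.norm_eq_abs, abs_of_nonneg h0]

lemma half_le_measureReal_tailSumLE [IsProbabilityMeasure (ℙ : Measure Ω)]
    (hident : ∀ i, IdentDistrib (X i) (X 0) ℙ ℙ) (hnonneg : ∀ i, ∀ᵐ ω ∂ℙ, 0 ≤ X i ω)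
    (hint : Integrable (X 0) ℙ) {m : ℝ} (hm : m = ∫ ω, X 0 ω ∂ℙ) (hmpos : 0 < m) (k j : ℕ) :
    1 / 2 ≤ (ℙ).real (tailSumLE X k j (2 * m * (j + 1))) := by
  have hXint : ∀ i, Integrable (X i) ℙ := fun i => (hident i).integrable_iff.2 hint
  refine half_le_measureReal_le (t := 2 * m * (j + 1)) ?_
    (integrable_finsetSum _ fun l _ => hXint _) (by positivity) ?_
  · filter_upwards [ae_all_iff.2 hnonneg] with ω hω
    exact sum_nonneg fun l _ => hω _
  · rw [integral_finsetSum _ fun l _ => hXint _,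
      sum_congr rfl fun l _ => (hident _).integral_eq.trans hm.symm, sum_const, card_range,
      nsmul_eq_mul]
    nlinarith

end RandomWalk

section Expectation

variable {Ω : Type*} [MeasureSpace Ω] [IsProbabilityMeasure (ℙ : Measure Ω)] {X : ℕ → Ω → ℝ}
  {m x : ℝ}

lemma half_le_pow_mul_measureReal_firstJump_inter (hmeas : ∀ i, Measurable (X i))
    (hindep : iIndepFun X ℙ) (hident : ∀ i, IdentDistrib (X i) (X 0) ℙ ℙ)
    (hnonneg : ∀ i, ∀ᵐ ω ∂ℙ, 0 ≤ X i ω) (hint : Integrable (X 0) ℙ)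
    (hm : m = ∫ ω, X 0 ω ∂ℙ) (hmpos : 0 < m) (hx : 0 < x)
    (hρ : 1 ≤ (ℙ).real (X 0 ⁻¹' {0}) * (1 + m / x)) (C : ℝ) (k j : ℕ) :
    (ℙ).real (X 0 ⁻¹' Set.Ioc 0 C) / 2 ≤
      (1 + m / x) ^ (k + 1) * (ℙ).real (firstJump X C k ∩ tailSumLE X k j (2 * m * (j + 1))) := by
  set r := (ℙ).real (X 0 ⁻¹' {0})
  set q := (ℙ).real (X 0 ⁻¹' Set.Ioc 0 C)
  have hD := half_le_measureReal_tailSumLE hident hnonneg hint hm hmpos k j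
  have hweight : 1 ≤ (1 + m / x) ^ (k + 1) * r ^ k := by
    rw [pow_succ, mul_right_comm, ← mul_pow, mul_comm _ r]
    exact one_le_mul_of_one_le_of_one_le (one_le_pow₀ hρ) (le_add_of_nonneg_right (by positivity))
  have hq : 0 ≤ q := measureReal_nonneg
  rw [measureReal_def, measure_firstJump_inter_tailSumLE hmeas hindep,
    measure_firstJump hindep hident, ENNReal.toReal_mul, ENNReal.toReal_mul, ENNReal.toReal_pow,
    ← measureReal_def, ← measureReal_def, ← measureReal_def]
  calc q / 2 ≤ q * (ℙ).real (tailSumLE X k j (2 * m * (j + 1))) := by nlinarith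
    _ ≤ (1 + m / x) ^ (k + 1) * r ^ k * (q * (ℙ).real (tailSumLE X k j (2 * m * (j + 1)))) :=
      le_mul_of_one_le_left (by positivity) hweight
    _ = _ := by ring

lemma mul_sum_le_integral_walkProduct (hmeas : ∀ i, Measurable (X i))
    (hindep : iIndepFun X ℙ) (hident : ∀ i, IdentDistrib (X i) (X 0) ℙ ℙ)
    (hnonneg : ∀ i, ∀ᵐ ω ∂ℙ, 0 ≤ X i ω) (hint : Integrable (X 0) ℙ)
    (hm : m = ∫ ω, X 0 ω ∂ℙ) (hmpos : 0 < m) (hx : 0 < x)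
    (hρ : 1 ≤ (ℙ).real (X 0 ⁻¹' {0}) * (1 + m / x)) {C : ℝ} (hC : 0 ≤ C) (n : ℕ) :
    ((n + 1) / 2 : ℕ) * ((ℙ).real (X 0 ⁻¹' Set.Ioc 0 C) / 2 *
      ∑ j ∈ range ((n + 1) / 2), m / (x + C + 2 * m * (j + 1))) ≤
      ∫ ω, walkProduct X m x n ω ∂ℙ := by
  set K := (n + 1) / 2
  set E : ℕ → ℕ → Set Ω := fun k j => firstJump X C k ∩ tailSumLE X k j (2 * m * (j + 1))
  have hE : ∀ k j, MeasurableSet (E k j) := fun k j =>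
    (measurableSet_firstJump hmeas C k).inter (measurableSet_tailSumLE hmeas k j _)
  set g : Ω → ℝ := fun ω => ∑ k ∈ range K,
    (1 + m / x) ^ (k + 1) *
      ∑ j ∈ range K, (E k j).indicator (fun _ => m / (x + C + 2 * m * (j + 1))) ω
  have hg_le : g ≤ᵐ[ℙ] walkProduct X m x n := by
    filter_upwards [ae_all_iff.2 hnonneg] with ω hω
    refine sum_le_of_pairwise_disjoint (pairwise_disjoint_firstJump C) (fun k _ hk => ?_)
      (walkProduct_mem_Icc hmpos.le hx n hω).1 fun k hk hωk =>
        pow_mul_sum_indicator_le_walkProduct hmpos.le hx (by rw [mem_range] at hk; omega) _ hω hωk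
    rw [sum_eq_zero fun j _ => Set.indicator_of_notMem (fun h => hk h.1) _, mul_zero]
  have hg : ∫ ω, g ω ∂ℙ = ∑ k ∈ range K, ∑ j ∈ range K,
      m / (x + C + 2 * m * (j + 1)) * ((1 + m / x) ^ (k + 1) * (ℙ).real (E k j)) := by
    simp only [g]
    rw [integral_finsetSum _ fun k _ => ((integrable_finsetSum _ fun j _ =>
      (integrable_const _).indicator (hE k j)).const_mul _)]
    refine sum_congr rfl fun k _ => ?_
    rw [integral_const_mul, integral_finsetSum _ fun j _ => (integrable_const _).indicator (hE k j),
      mul_sum]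
    refine sum_congr rfl fun j _ => ?_
    rw [integral_indicator_const _ (hE k j), smul_eq_mul]
    ring
  calc _ = ∑ _k ∈ range K, ∑ j ∈ range K,
        m / (x + C + 2 * m * (j + 1)) * ((ℙ).real (X 0 ⁻¹' Set.Ioc 0 C) / 2) := by
        rw [sum_const, card_range, nsmul_eq_mul, mul_comm (_ / 2), sum_mul]
    _ ≤ ∫ ω, g ω ∂ℙ := by
        rw [hg]
        gcongr with k _ j
        exact half_le_pow_mul_measureReal_firstJump_inter hmeas hindep hident hnonneg hint hm
          hmpos hx hρ C k j
    _ ≤ _ := integral_mono_ae (integrable_finsetSum _ fun k _ => (integrable_finsetSum _ fun j _ =>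
        (integrable_const _).indicator (hE k j)).const_mul _)
        (integrable_walkProduct hmeas hnonneg hmpos.le hx n) hg_le

lemma tendsto_integral_walkProduct_div_atTop (hmeas : ∀ i, Measurable (X i))
    (hindep : iIndepFun X ℙ) (hident : ∀ i, IdentDistrib (X i) (X 0) ℙ ℙ)
    (hnonneg : ∀ i, ∀ᵐ ω ∂ℙ, 0 ≤ X i ω) (hint : Integrable (X 0) ℙ)
    (hm : m = ∫ ω, X 0 ω ∂ℙ) (hmpos : 0 < m) (hx : 0 < x)
    (hρ : 1 ≤ (ℙ).real (X 0 ⁻¹' {0}) * (1 + m / x)) {C : ℝ} (hC : 0 ≤ C)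
    (hq : 0 < (ℙ).real (X 0 ⁻¹' Set.Ioc 0 C)) :
    Tendsto (fun n : ℕ => (∫ ω, walkProduct X m x n ω ∂ℙ) / n) atTop atTop := by
  set q := (ℙ).real (X 0 ⁻¹' Set.Ioc 0 C)
  have hK : Tendsto (fun n : ℕ => (n + 1) / 2) atTop atTop :=
    tendsto_atTop_atTop.2 fun b => ⟨2 * b, fun n hn => by omega⟩
  refine tendsto_atTop_mono' atTop ?_ (((tendsto_sum_range_div_add_mul_succ_atTop hmpos
    (by positivity : 0 < 2 * m) (by positivity : 0 ≤ x + C)).comp hK).const_mul_atTop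
    (by positivity : 0 < q / 4))
  filter_upwards [eventually_ge_atTop 1] with n hn
  have hKn : (n : ℝ) / 2 ≤ ((n + 1) / 2 : ℕ) := by
    rw [div_le_iff₀ two_pos]
    exact_mod_cast (by omega : n ≤ (n + 1) / 2 * 2)
  rw [Function.comp_apply, le_div_iff₀ (by positivity)]
  calc _ = (n : ℝ) / 2 * (q / 2 * ∑ j ∈ range ((n + 1) / 2), m / (x + C + 2 * m * (j + 1))) := by
        ring
    _ ≤ _ := by gcongr
    _ ≤ _ := mul_sum_le_integral_walkProduct hmeas hindep hident hnonneg hint hm hmpos hx hρ hC n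

end Expectation

theorem rho_infinite_below_m0_general
    {Ω : Type*} [MeasureSpace Ω] [IsProbabilityMeasure (ℙ : Measure Ω)]
    (X : ℕ → Ω → ℝ)
    (hmeas : ∀ i, Measurable (X i))
    (hindep : iIndepFun X ℙ)
    (hident : ∀ i, IdentDistrib (X i) (X 0) ℙ ℙ)
    (hnonneg : ∀ i, ∀ᵐ ω ∂ℙ, 0 ≤ X i ω)
    (hint : Integrable (X 0) ℙ)
    (m : ℝ) (hm : m = ∫ ω, X 0 ω ∂ℙ) (hmpos : 0 < m)
    (r : ℝ) (hr : r = (ℙ {ω | X 0 ω = 0}).toReal) (hr1 : r < 1)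
    (S : ℕ → Ω → ℝ) (hS : ∀ i ω, S i ω = ∑ j ∈ Finset.range i, X j ω)
    (x : ℝ) (hx : 0 < x) (hxm : x ≤ m * r / (1 - r)) :
    Filter.limsup (fun n : ℕ =>
        ENNReal.ofReal ((∫ ω, ∏ i ∈ Finset.range (n + 1), (1 + m / (x + S i ω)) ∂ℙ) / n))
      Filter.atTop = ⊤ := by
  obtain rfl : S = fun i ω => ∑ j ∈ range i, X j ω := funext fun i => funext (hS i)
  have hr' : (ℙ).real (X 0 ⁻¹' {0}) = r := hr.symm
  have hzero : ℙ (X 0 ⁻¹' {0}) < 1 := by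
    rwa [← ENNReal.toReal_lt_toReal (measure_ne_top _ _) ENNReal.one_ne_top, ENNReal.toReal_one,
      ← measureReal_def, hr']
  obtain ⟨C, hC, hq⟩ := exists_measure_preimage_Ioc_pos (hnonneg 0) hzero
  have hρ : 1 ≤ (ℙ).real (X 0 ⁻¹' {0}) * (1 + m / x) := hr' ▸ one_le_mul_one_add_div hx hr1 hxm
  have hq' : 0 < (ℙ).real (X 0 ⁻¹' Set.Ioc 0 C) := ENNReal.toReal_pos hq.ne' (measure_ne_top _ _)
  exact (ENNReal.tendsto_ofReal_atTop.comp (tendsto_integral_walkProduct_div_atTop hmeas hindep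
    hident hnonneg hint hm hmpos hx hρ hC hq')).limsup_eq

/-- Let `X 0, X 1, ...` be i.i.d. nonnegative integrable random variables with `E[X] > 0` and
`r := P(X = 0) ∈ (0,1)`, and set `m₀ := E[X]·r/(1−r)`.  With `S i` the partial sums
(`S 0 = 0`) and `R_n(x) := ∏_{i=0}^{n} (1 + E[X]/(x + S i))`, if `0 < x ≤ m₀` then
`limsup_n E[R_n(x)]/n = ∞` (stated in `ℝ≥0∞`; the integrands are nonnegative). -/
theorem rho_infinite_below_m0
    {Ω : Type*} [MeasureSpace Ω] [IsProbabilityMeasure (ℙ : Measure Ω)]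
    (X : ℕ → Ω → ℝ)
    (hmeas : ∀ i, Measurable (X i))
    (hindep : iIndepFun X ℙ)
    (hident : ∀ i, IdentDistrib (X i) (X 0) ℙ ℙ)
    (hnonneg : ∀ i, ∀ᵐ ω ∂ℙ, 0 ≤ X i ω)
    (hint : Integrable (X 0) ℙ)
    (m : ℝ) (hm : m = ∫ ω, X 0 ω ∂ℙ) (hmpos : 0 < m)
    (r : ℝ) (hr : r = (ℙ {ω | X 0 ω = 0}).toReal) (hr0 : 0 < r) (hr1 : r < 1)
    (S : ℕ → Ω → ℝ) (hS : ∀ i ω, S i ω = ∑ j ∈ Finset.range i, X j ω)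
    (x : ℝ) (hx : 0 < x) (hxm : x ≤ m * r / (1 - r)) :
    Filter.limsup (fun n : ℕ =>
        ENNReal.ofReal ((∫ ω, ∏ i ∈ Finset.range (n + 1), (1 + m / (x + S i ω)) ∂ℙ) / n))
      Filter.atTop = ⊤ :=
  rho_infinite_below_m0_general X hmeas hindep hident hnonneg hint m hm hmpos r hr hr1 S hS x hx hxm
end

section
/- For the Bernoulli offspring distribution p = (1−λ)δ_0 + λδ_i with λ ∈ (0,1) and integer i ≥ 1, letting L have distribution p, the smallest c ≥ 0 such that E[s^L] ≤ (1 + E[L](1 − s^c))^{−1/c} for all s ∈ [0,1] is c = −log(1 + λi)/log(1 − λ). -/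
/-!
Raising both sides to the power `-c`, `L ∈ 𝒢_c` says that
`H(s) = (1 - λ + λ s^i)^(-c) + λ i s^c ≥ 1 + λ i` on `[0, 1]` (`H` is `criterion`).
Since `H(1) = 1 + λ i` and `H(0) = (1 - λ)^(-c)`, the point `s = 0` alone forces
`c ≥ -log(1 + λ i) / log(1 - λ)`. Conversely `H'` has the sign of
`ψ(s) = (c - i) log s + (c + 1) log (1 - λ + λ s^i)` (`logRatio`), and `s ψ'(s)` is increasing,
so `ψ` is quasiconvex with `ψ(1) = 0`: `H` first increases, then decreases, hence
`H ≥ min (H 0) (H 1)`, which is `≥ 1 + λ i` exactly when `c ≥ -log(1 + λ i) / log(1 - λ)`.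
-/

open Real Set

theorem quasiconvexOn_of_hasDerivAt_of_monotoneOn {D : Set ℝ} (hD : D.OrdConnected)
    {ψ ψ' g : ℝ → ℝ} (hψ : ∀ x ∈ D, HasDerivAt ψ (ψ' x) x) (hg : MonotoneOn g D)
    (hnonpos : ∀ x ∈ D, g x ≤ 0 → ψ' x ≤ 0) (hnonneg : ∀ x ∈ D, 0 ≤ g x → 0 ≤ ψ' x) :
    QuasiconvexOn ℝ D ψ := by
  refine fun r => convex_iff_ordConnected.2 ⟨fun x hx y hy t ht => ⟨hD.out hx.1 hy.1 ht, ?_⟩⟩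
  have hcont {u v : ℝ} (h : Icc u v ⊆ D) : ContinuousOn ψ (Icc u v) :=
    fun w hw => (hψ w (h hw)).continuousAt.continuousWithinAt
  have hderiv {u v : ℝ} (h : Icc u v ⊆ D) :
      ∀ w ∈ interior (Icc u v), HasDerivWithinAt ψ (ψ' w) (interior (Icc u v)) w :=
    fun w hw => (hψ w (h (interior_subset hw))).hasDerivWithinAt
  have htD : t ∈ D := hD.out hx.1 hy.1 ht
  rcases le_total (g t) 0 with hgt | hgt
  · have hsub : Icc x t ⊆ D := hD.out hx.1 htD
    have hanti := antitoneOn_of_hasDerivWithinAt_nonpos (convex_Icc x t) (hcont hsub)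
      (hderiv hsub) fun w hw => by
        rw [interior_Icc] at hw
        exact hnonpos w (hsub (Ioo_subset_Icc_self hw))
          ((hg (hsub (Ioo_subset_Icc_self hw)) htD hw.2.le).trans hgt)
    exact (hanti (left_mem_Icc.2 ht.1) (right_mem_Icc.2 ht.1) ht.1).trans hx.2
  · have hsub : Icc t y ⊆ D := hD.out htD hy.1
    have hmono := monotoneOn_of_hasDerivWithinAt_nonneg (convex_Icc t y) (hcont hsub)
      (hderiv hsub) fun w hw => by
        rw [interior_Icc] at hw
        exact hnonneg w (hsub (Ioo_subset_Icc_self hw))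
          (hgt.trans (hg htD (hsub (Ioo_subset_Icc_self hw)) hw.1.le))
    exact (hmono (left_mem_Icc.2 ht.2) (right_mem_Icc.2 ht.2) ht.2).trans hy.2

theorem min_le_of_hasDerivAt_of_quasiconvexOn {f f' ψ : ℝ → ℝ} {a b : ℝ}
    (hf : ContinuousOn f (Icc a b)) (hf' : ∀ x ∈ Ioo a b, HasDerivAt f (f' x) x)
    (hψ : QuasiconvexOn ℝ (Ioc a b) ψ) (hψb : ψ b ≤ 0)
    (hnonneg : ∀ x ∈ Ioo a b, 0 < ψ x → 0 ≤ f' x) (hnonpos : ∀ x ∈ Ioo a b, ψ x ≤ 0 → f' x ≤ 0)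
    {s : ℝ} (hs : s ∈ Icc a b) : min (f a) (f b) ≤ f s := by
  rcases hs.1.eq_or_lt with rfl | has
  · exact min_le_left _ _
  have hb : b ∈ Ioc a b := ⟨has.trans_le hs.2, le_rfl⟩
  have hsub {u v : ℝ} (hu : a ≤ u) (hv : v ≤ b) : ∀ x ∈ interior (Icc u v),
      HasDerivWithinAt f (f' x) (interior (Icc u v)) x := fun x hx => by
    rw [interior_Icc] at hx
    exact (hf' x ⟨hu.trans_lt hx.1, hx.2.trans_le hv⟩).hasDerivWithinAt
  -- The sublevel set `{ψ ≤ 0}` is an interval containing `b`.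
  have hsublevel {x y : ℝ} (hx : x ∈ Ioc a b) (hψx : ψ x ≤ 0) (hxy : x ≤ y) (hyb : y ≤ b) :
      ψ y ≤ 0 :=
    ((hψ 0).ordConnected.out ⟨hx, hψx⟩ ⟨hb, hψb⟩ ⟨hxy, hyb⟩).2
  by_cases hψs : ψ s ≤ 0
  · have hanti := antitoneOn_of_hasDerivWithinAt_nonpos (convex_Icc s b)
      (hf.mono (Icc_subset_Icc_left hs.1)) (hsub hs.1 le_rfl) fun x hx => by
        rw [interior_Icc] at hx
        exact hnonpos x ⟨has.trans hx.1, hx.2⟩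
          (hsublevel ⟨has, hs.2⟩ hψs hx.1.le hx.2.le)
    exact (min_le_right _ _).trans (hanti (left_mem_Icc.2 hs.2) (right_mem_Icc.2 hs.2) hs.2)
  · have hmono := monotoneOn_of_hasDerivWithinAt_nonneg (convex_Icc a s)
      (hf.mono (Icc_subset_Icc_right hs.2)) (hsub le_rfl hs.2) fun x hx => by
        rw [interior_Icc] at hx
        refine hnonneg x ⟨hx.1, hx.2.trans_le hs.2⟩ (lt_of_not_ge fun hψx => hψs ?_)
        exact hsublevel ⟨hx.1, hx.2.le.trans hs.2⟩ hψx hx.2.le hs.2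
    exact (min_le_left _ _).trans (hmono (left_mem_Icc.2 hs.1) (right_mem_Icc.2 hs.1) hs.1)

theorem le_rpow_neg_iff_neg_log_div_log_le {a M c : ℝ} (ha0 : 0 < a) (ha1 : a < 1) (hM : 0 < M) :
    M ≤ a ^ (-c) ↔ -log M / log a ≤ c := by
  rw [le_rpow_iff_log_le hM ha0, div_le_iff_of_neg (log_neg ha0 ha1)]
  constructor <;> intro h <;> linarith

namespace BernoulliOffspring

noncomputable def pgf (i : ℕ) (l s : ℝ) : ℝ := 1 - l + l * s ^ i

noncomputable def criterion (i : ℕ) (l c s : ℝ) : ℝ := pgf i l s ^ (-c) + l * i * s ^ c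

noncomputable def logRatio (i : ℕ) (l c s : ℝ) : ℝ := (c - i) * log s + (c + 1) * log (pgf i l s)

variable {i : ℕ} {l c s : ℝ}

theorem pgf_pos (hl0 : 0 ≤ l) (hl1 : l < 1) (hs : 0 ≤ s) : 0 < pgf i l s := by
  have : 0 ≤ l * s ^ i := by positivity
  unfold pgf; linarith

theorem hasDerivAt_pgf (i : ℕ) (l s : ℝ) : HasDerivAt (pgf i l) (l * (i * s ^ (i - 1))) s :=
  ((hasDerivAt_pow i s).const_mul l).const_add (1 - l)

theorem monotoneOn_pow_div_pgf (hl0 : 0 ≤ l) (hl1 : l < 1) :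
    MonotoneOn (fun s => s ^ i / pgf i l s) (Ici 0) := by
  intro s hs t ht hst
  have hpow : s ^ i ≤ t ^ i := pow_le_pow_left₀ hs hst i
  rw [div_le_div_iff₀ (pgf_pos hl0 hl1 hs) (pgf_pos hl0 hl1 ht)]
  unfold pgf
  nlinarith

theorem hasDerivAt_logRatio (hl0 : 0 ≤ l) (hl1 : l < 1) (hs : 0 < s) :
    HasDerivAt (logRatio i l c)
      ((c - i + (c + 1) * (l * i) * (s ^ i / pgf i l s)) / s) s := by
  have hF := pgf_pos (i := i) hl0 hl1 hs.le
  have h : HasDerivAt (logRatio i l c)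
      ((c - i) * s⁻¹ + (c + 1) * ((pgf i l s)⁻¹ * (l * (i * s ^ (i - 1))))) s :=
    ((hasDerivAt_log hs.ne').const_mul (c - i)).add
      (((hasDerivAt_log hF.ne').comp s (hasDerivAt_pgf i l s)).const_mul (c + 1))
  refine h.congr_deriv ?_
  rcases i with _ | i
  · simp [div_eq_mul_inv]
  · rw [Nat.add_sub_cancel, pow_succ]
    field_simp

theorem quasiconvexOn_logRatio (hl0 : 0 ≤ l) (hl1 : l < 1) (hc : -1 ≤ c) :
    QuasiconvexOn ℝ (Ioi 0) (logRatio i l c) := by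
  refine quasiconvexOn_of_hasDerivAt_of_monotoneOn ordConnected_Ioi
    (fun s hs => hasDerivAt_logRatio hl0 hl1 hs) ?_
    (fun s hs h => div_nonpos_of_nonpos_of_nonneg h (le_of_lt hs))
    (fun s hs h => div_nonneg h (le_of_lt hs))
  intro s hs t ht hst
  have := monotoneOn_pow_div_pgf (i := i) hl0 hl1 (Ioi_subset_Ici_self hs)
    (Ioi_subset_Ici_self ht) hst
  have : 0 ≤ (c + 1) * (l * i) := mul_nonneg (by linarith) (by positivity)
  dsimp only
  gcongr

theorem hasDerivAt_criterion (hl0 : 0 ≤ l) (hl1 : l < 1) (hs : 0 < s) :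
    HasDerivAt (criterion i l c) (l * i * c * s ^ (c - 1) * (1 - exp (-logRatio i l c s))) s := by
  have hF := pgf_pos (i := i) hl0 hl1 hs.le
  have h : HasDerivAt (criterion i l c)
      (-c * pgf i l s ^ (-c - 1) * (l * (i * s ^ (i - 1))) + l * i * (c * s ^ (c - 1))) s :=
    ((hasDerivAt_rpow_const (Or.inl hF.ne')).comp s (hasDerivAt_pgf i l s)).add
      ((hasDerivAt_rpow_const (Or.inl hs.ne')).const_mul (l * i))
  refine h.congr_deriv ?_
  rcases i with _ | i
  · simp
  -- the two terms of the derivative differ by the factor `exp (-logRatio)`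
  have hratio :
      s ^ i * pgf (i + 1) l s ^ (-c - 1) = s ^ (c - 1) * exp (-logRatio (i + 1) l c s) := by
    rw [← rpow_natCast, rpow_def_of_pos hs, rpow_def_of_pos hs, rpow_def_of_pos hF, ← exp_add,
      ← exp_add]
    congr 1
    unfold logRatio
    push_cast
    ring
  rw [Nat.add_sub_cancel]
  push_cast
  linear_combination (-c * l * (i + 1 : ℝ)) * hratio

theorem continuousOn_criterion (hl0 : 0 ≤ l) (hl1 : l < 1) (hc : 0 ≤ c) :
    ContinuousOn (criterion i l c) (Ici 0) := by
  refine fun s hs => ContinuousAt.continuousWithinAt ?_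
  exact ((continuous_const.add (continuous_const.mul (continuous_pow i))).continuousAt.rpow_const
    (Or.inl (pgf_pos hl0 hl1 hs).ne')).add
    (continuousAt_const.mul (continuousAt_rpow_const s c (Or.inr hc)))

theorem min_le_criterion (hl0 : 0 ≤ l) (hl1 : l < 1) (hc : 0 ≤ c) (hs : s ∈ Icc 0 1) :
    min (criterion i l c 0) (criterion i l c 1) ≤ criterion i l c s := by
  have hprefactor {x : ℝ} (hx : 0 < x) : 0 ≤ l * i * c * x ^ (c - 1) := by
    have := rpow_pos_of_pos hx (c - 1)
    have := mul_nonneg hl0 (Nat.cast_nonneg i)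
    positivity
  refine min_le_of_hasDerivAt_of_quasiconvexOn
    ((continuousOn_criterion hl0 hl1 hc).mono Icc_subset_Ici_self)
    (fun x hx => hasDerivAt_criterion hl0 hl1 hx.1)
    (Convex.quasiconvexOn_restrict (quasiconvexOn_logRatio (i := i) hl0 hl1 (by linarith))
      Ioc_subset_Ioi_self (convex_Ioc 0 1))
    (by simp [logRatio, pgf]) (fun x hx hψ => ?_) (fun x hx hψ => ?_) hs
  · exact mul_nonneg (hprefactor hx.1) (sub_nonneg.2 (exp_le_one_iff.2 (by linarith)))
  · exact mul_nonpos_of_nonneg_of_nonpos (hprefactor hx.1)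
      (sub_nonpos.2 (one_le_exp_iff.2 (by linarith)))

theorem criterion_zero (hi : i ≠ 0) (hc : c ≠ 0) : criterion i l c 0 = (1 - l) ^ (-c) := by
  simp [criterion, pgf, zero_pow hi, zero_rpow hc]

theorem criterion_one : criterion i l c 1 = 1 + l * i := by
  simp [criterion, pgf]

theorem pgf_le_iff_le_criterion (hl0 : 0 ≤ l) (hl1 : l < 1) (hc : 0 < c) (hs : s ∈ Icc 0 1) :
    pgf i l s ≤ (1 + l * i * (1 - s ^ c)) ^ (-1 / c) ↔ 1 + l * i ≤ criterion i l c s := by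
  have hsc : s ^ c ≤ 1 := rpow_le_one hs.1 hs.2 hc.le
  have hY : 0 < 1 + l * i * (1 - s ^ c) := by
    have := mul_nonneg (mul_nonneg hl0 (Nat.cast_nonneg i)) (sub_nonneg.2 hsc)
    linarith
  rw [show -1 / c = (-c)⁻¹ by field_simp,
    le_rpow_inv_iff_of_neg (pgf_pos hl0 hl1 hs.1) hY (neg_neg_of_pos hc), criterion]
  constructor <;> intro h <;> linarith

end BernoulliOffspring

open BernoulliOffspring

/-- For the Bernoulli offspring distribution `p = (1−λ)δ₀ + λδ_i` with `λ ∈ (0,1)` and an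
integer `i ≥ 1` (so `E[L] = λi` and `E[s^L] = 1 − λ + λs^i`), the smallest `c > 0` such that
`1 − λ + λs^i ≤ (1 + λi(1 − s^c))^{−1/c}` for all `s ∈ [0,1]` is
`c = −log(1 + λi)/log(1 − λ)` (real powers `s^c` are `Real.rpow`). -/
theorem bernoulli_C_value
    (i : ℕ) (hi : 1 ≤ i) (l : ℝ) (hl : l ∈ Set.Ioo (0 : ℝ) 1) :
    sInf {c : ℝ | 0 < c ∧ ∀ s ∈ Set.Icc (0 : ℝ) 1,
        1 - l + l * s ^ i ≤ (1 + l * i * (1 - s ^ c)) ^ (-1 / c)} =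
      -Real.log (1 + l * i) / Real.log (1 - l) := by
  obtain ⟨hl0, hl1⟩ := hl
  have hM : 1 < 1 + l * i := by
    have : (1 : ℝ) ≤ i := by exact_mod_cast hi
    nlinarith
  have hi0 : i ≠ 0 := by omega
  have h1l : 0 < 1 - l := by linarith
  have hzero {c : ℝ} (hc : 0 < c) : 1 + l * i ≤ criterion i l c 0 ↔
      -log (1 + l * i) / log (1 - l) ≤ c := by
    rw [criterion_zero hi0 hc.ne']
    exact le_rpow_neg_iff_neg_log_div_log_le h1l (by linarith) (by linarith)
  have hc : 0 < -log (1 + l * i) / log (1 - l) :=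
    div_pos_of_neg_of_neg (neg_neg_of_pos (log_pos hM)) (log_neg h1l (by linarith))
  refine IsLeast.csInf_eq ⟨⟨hc, fun s hs => ?_⟩, fun c ⟨hc', h⟩ => ?_⟩
  · refine (pgf_le_iff_le_criterion hl0.le hl1 hc hs).2 ?_
    exact (le_min ((hzero hc).2 le_rfl) criterion_one.ge).trans
      (min_le_criterion hl0.le hl1 hc.le hs)
  · have h0 : (0 : ℝ) ∈ Icc 0 1 := ⟨le_rfl, zero_le_one⟩
    exact (hzero hc').1 ((pgf_le_iff_le_criterion hl0.le hl1 hc' h0).1 (h 0 h0))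
end
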